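/- arXiv:1006.2961 — 3 statements merged into one kernel-verified Lean document; each statement's English description precedes it below -/
import Mathlib

section
/- Let p be a prime, t the multiplicative order of an element ε ∈ (ℤ/p)^*, and n a positive integer. The multiplicity of ε as a root of the reduction of Φ_n modulo p is positive if and only if n = t·p^f for some f ≥ 0. -/
/-!
In characteristic `p`, `Φ_{p^k m} = Φ_m ^ (p^k - p^(k-1))` for `p ∤ m`, so the roots of
`Φ_{p^k m}` are exactly the primitive `m`-th roots of unity. An element `μ` of finite order
`t` has `p ∤ t` (there are no nontrivial `p`-th roots of unity in characteristic `p`), so `μ` is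
a root of `Φ_n` exactly when the `p`-free part of `n` is `t`.
-/

open Polynomial

theorem isRoot_cyclotomic_iff_exists_eq_orderOf_mul_pow {R : Type*} [CommRing R] [IsDomain R]
    {p : ℕ} [Fact p.Prime] [CharP R p] {μ : R} (hμ : IsOfFinOrder μ) {n : ℕ} :
    (cyclotomic n R).IsRoot μ ↔ ∃ f : ℕ, n = orderOf μ * p ^ f := by
  have : NeZero (orderOf μ) := ⟨hμ.orderOf_pos.ne'⟩
  have : NeZero (orderOf μ : R) := (IsPrimitiveRoot.orderOf μ).neZero'
  constructor
  · intro hroot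
    rcases eq_or_ne n 0 with rfl | hn
    · simp at hroot
    obtain ⟨k, m, hpm, rfl⟩ := Nat.exists_eq_pow_mul_and_not_dvd hn p (Fact.out : p.Prime).ne_one
    have : NeZero (m : R) := ⟨fun h => hpm ((CharP.cast_eq_zero_iff R p m).mp h)⟩
    rw [isRoot_cyclotomic_prime_pow_mul_iff_of_charP] at hroot
    exact ⟨k, by rw [hroot.eq_orderOf, mul_comm]⟩
  · rintro ⟨f, rfl⟩
    rw [mul_comm, isRoot_cyclotomic_prime_pow_mul_iff_of_charP]
    exact IsPrimitiveRoot.orderOf μ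

theorem rootMultiplicity_cyclotomic_pos_iff_general (p n t : ℕ) (hp : p.Prime)
    (ε : (ZMod p)ˣ) (ht : orderOf ε = t) :
    0 < ((cyclotomic n ℤ).map (Int.castRingHom (ZMod p))).rootMultiplicity (ε : ZMod p) ↔
      ∃ f : ℕ, n = t * p ^ f := by
  have : Fact p.Prime := ⟨hp⟩
  rw [map_cyclotomic, rootMultiplicity_pos (cyclotomic_ne_zero n (ZMod p)),
    isRoot_cyclotomic_iff_exists_eq_orderOf_mul_pow (Units.isOfFinOrder_val.mpr
      (isOfFinOrder_of_finite ε)), orderOf_units, ht]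

/-- Let `ε ∈ (ℤ/p)ˣ` have multiplicative order `t`.  The multiplicity of `ε` as a root of
the reduction of `Φ_n` mod `p` is positive iff `n = t * p ^ f` for some `f`. -/
theorem rootMultiplicity_cyclotomic_pos_iff (p n t : ℕ) (hp : p.Prime) (hn : 0 < n)
    (ε : (ZMod p)ˣ) (ht : orderOf ε = t) :
    0 < ((cyclotomic n ℤ).map (Int.castRingHom (ZMod p))).rootMultiplicity (ε : ZMod p) ↔
      ∃ f : ℕ, n = t * p ^ f :=
  rootMultiplicity_cyclotomic_pos_iff_general p n t hp ε ht
end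

section
/- Let p be a prime, ε ∈ (ℤ/p)^* of multiplicative order t, and n a positive integer. Then the multiplicity of ε as a root of the reduction of Φ_n modulo p is at most φ(n)/φ(t). -/
/-!
Write `n = p ^ k * m` with `p ∤ m`. In characteristic `p` one has `Φ_n = Φ_m ^ φ(p ^ k)`, and `Φ_m`
is separable because `m` is invertible, so every root of `Φ_n` mod `p` has multiplicity exactly
`φ(p ^ k)`. Its roots are the primitive `m`-th roots of unity, so a root `ε` has order `t = m`, and
`φ(n) / φ(t) = φ(p ^ k)` by multiplicativity of `φ`.
-/

open Polynomial

namespace Polynomial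

theorem rootMultiplicity_pow {R : Type*} [CommRing R] [IsDomain R] (f : R[X]) (n : ℕ) (a : R) :
    (f ^ n).rootMultiplicity a = n * f.rootMultiplicity a := by
  classical
  rw [← count_roots, roots_pow, Multiset.count_nsmul, count_roots]

theorem cyclotomic_prime_pow_mul_eq_pow_totient (R : Type*) {p m : ℕ} [Fact p.Prime] [Ring R]
    [CharP R p] (hm : ¬p ∣ m) (k : ℕ) :
    cyclotomic (p ^ k * m) R = cyclotomic m R ^ (p ^ k).totient := by
  rcases k.eq_zero_or_pos with rfl | hk
  · simp
  rw [cyclotomic_mul_prime_pow_eq R hm hk, Nat.totient_prime_pow Fact.out hk, Nat.mul_sub,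
    mul_one, ← pow_succ, Nat.sub_add_cancel hk]

open scoped Classical in
theorem rootMultiplicity_cyclotomic_prime_pow_mul {K : Type*} [Field K] {p m : ℕ} [Fact p.Prime]
    [CharP K p] [NeZero (m : K)] (k : ℕ) (μ : K) :
    (cyclotomic (p ^ k * m) K).rootMultiplicity μ =
      if IsPrimitiveRoot μ m then (p ^ k).totient else 0 := by
  rw [cyclotomic_prime_pow_mul_eq_pow_totient K (NeZero.not_char_dvd K p m), rootMultiplicity_pow]
  split_ifs with hμ
  · have hroot : 0 < (cyclotomic m K).rootMultiplicity μ :=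
      (rootMultiplicity_pos (cyclotomic_ne_zero m K)).mpr (isRoot_cyclotomic_iff.mpr hμ)
    have hsimple : (cyclotomic m K).rootMultiplicity μ ≤ 1 :=
      rootMultiplicity_le_one_of_separable (separable_cyclotomic m K) μ
    rw [le_antisymm hsimple hroot, mul_one]
  · rw [rootMultiplicity_eq_zero (mt isRoot_cyclotomic_iff.mp hμ), mul_zero]

end Polynomial

/-- Let `ε ∈ (ℤ/p)ˣ` have multiplicative order `t`.  The multiplicity of `ε` as a root of
the reduction of `Φ_n` mod `p` is at most `φ(n) / φ(t)`. -/
theorem rootMultiplicity_cyclotomic_le (p n t : ℕ) (hp : p.Prime) (hn : 0 < n)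
    (ε : (ZMod p)ˣ) (ht : orderOf ε = t) :
    ((cyclotomic n ℤ).map (Int.castRingHom (ZMod p))).rootMultiplicity (ε : ZMod p) ≤
      Nat.totient n / Nat.totient t := by
  have : Fact p.Prime := ⟨hp⟩
  set k := n.factorization p
  set m := n / p ^ k
  have hnm : p ^ k * m = n := Nat.ordProj_mul_ordCompl_eq_self n p
  have hpm : ¬p ∣ m := Nat.not_dvd_ordCompl hp hn.ne'
  have : NeZero (m : ZMod p) := ⟨by rwa [Ne, ZMod.natCast_eq_zero_iff]⟩
  rw [map_cyclotomic_int, ← hnm, rootMultiplicity_cyclotomic_prime_pow_mul]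
  split_ifs with hprim
  · have htm : t = m := by rw [← ht, ← orderOf_units, ← hprim.eq_orderOf]
    rw [htm, Nat.totient_mul (Nat.Coprime.pow_left _ (hp.coprime_iff_not_dvd.mpr hpm)),
      Nat.mul_div_cancel _ (Nat.totient_pos.mpr (Nat.ordCompl_pos p hn.ne'))]
  · exact Nat.zero_le _
end

section
/- Let p be a prime, ε ∈ (ℤ/p)^* of order t, and g ∈ GL_d(ℤ) of finite order. Then the dimension of the ε-eigenspace of the reduction of g modulo p (as an endomorphism of (ℤ/p)^d) is at most d/φ(t). -/
open Polynomial Nat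

/-!
Let `n` be the order of `g`. Every irreducible factor of the characteristic polynomial of `g`
over `ℚ` has a root `α` in `AdjoinRoot`, which is an eigenvalue of `g`, so `α ^ n = 1` and the
factor divides `X ^ n - 1 = ∏_{m ∣ n} Φ_m`. Hence the characteristic polynomial is a product of
cyclotomic polynomials, already over `ℤ`, and so is its reduction mod `p`.

The dimension of the `ε`-eigenspace is at most the multiplicity of `ε` as a root of this product.
If `m = p ^ k * m'` with `p ∤ m'`, then `Φ_m = Φ_{m'} ^ φ(p ^ k)` mod `p`, and `Φ_{m'}` is
separable mod `p` with roots the primitive `m'`-th roots of unity. So `ε` is a root of `Φ_m` only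
if `t = m'`, and then with multiplicity `φ(p ^ k) = φ(m) / φ(t)`. Summing over the factors bounds
`φ(t)` times the dimension by the degree `d`.
-/

theorem Matrix.pow_eq_one_of_isRoot_charpoly {K ι : Type*} [Field K] [Fintype ι] [DecidableEq ι]
    {M : Matrix ι ι K} {n : ℕ} (hM : M ^ n = 1) {μ : K} (hμ : M.charpoly.IsRoot μ) :
    μ ^ n = 1 := by
  have hμ_eig : Module.End.HasEigenvalue (Matrix.toLin' M) μ := by
    rwa [Module.End.hasEigenvalue_iff_isRoot_charpoly, Matrix.charpoly_toLin']
  have hpow_eig := hμ_eig.pow n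
  rw [← Matrix.toLin'_pow, hM, Matrix.toLin'_one] at hpow_eig
  obtain ⟨v, hv⟩ := hpow_eig.exists_hasEigenvector
  exact smul_left_injective K hv.2 (by simpa using hv.apply_eq_smul.symm)

theorem Matrix.dvd_X_pow_sub_one_of_irreducible_dvd_charpoly {K ι : Type*} [Field K] [Fintype ι]
    [DecidableEq ι] {M : Matrix ι ι K} {n : ℕ} (hM : M ^ n = 1) {r : K[X]} (hr : Irreducible r)
    (h : r ∣ M.charpoly) : r ∣ X ^ n - 1 := by
  have := Fact.mk hr
  rw [← AdjoinRoot.mk_eq_zero, ← AdjoinRoot.aeval_eq, map_sub, map_pow, aeval_X, map_one,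
    sub_eq_zero]
  refine Matrix.pow_eq_one_of_isRoot_charpoly (M := M.map (algebraMap K (AdjoinRoot r))) ?_ ?_
  · rw [← RingHom.mapMatrix_apply, ← map_pow, hM, map_one]
  · rwa [Matrix.charpoly_map, IsRoot.def, eval_map_algebraMap, AdjoinRoot.aeval_eq,
      AdjoinRoot.mk_eq_zero]

theorem Polynomial.exists_eq_cyclotomic_of_irreducible_of_dvd_X_pow_sub_one {r : ℚ[X]}
    (hr : Irreducible r) (hmon : r.Monic) {n : ℕ} (hn : 0 < n) (h : r ∣ X ^ n - 1) :
    ∃ m, r = cyclotomic m ℚ := by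
  rw [← prod_cyclotomic_eq_X_pow_sub_one hn] at h
  obtain ⟨m, hm, hdvd⟩ := hr.prime.exists_mem_finset_dvd h
  exact ⟨m, eq_of_monic_of_associated hmon (cyclotomic.monic m ℚ)
    (hr.associated_of_dvd (cyclotomic.irreducible_rat (Nat.pos_of_mem_divisors hm)) hdvd)⟩

theorem Multiset.exists_map_eq_of_forall_mem_range {α β : Type*} {f : α → β} {S : Multiset β}
    (h : ∀ b ∈ S, b ∈ Set.range f) : ∃ s : Multiset α, s.map f = S := by
  refine ⟨S.attach.map fun b => (h b.1 b.2).choose, ?_⟩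
  rw [Multiset.map_map]
  exact (Multiset.map_congr rfl fun b _ => (h b.1 b.2).choose_spec).trans S.attach_map_val

open UniqueFactorizationMonoid in
theorem Polynomial.Monic.exists_eq_prod_cyclotomic {q : ℚ[X]} (hq : q.Monic) {n : ℕ}
    (hn : 0 < n) (h : ∀ r, Irreducible r → r ∣ q → r ∣ X ^ n - 1) :
    ∃ s : Multiset ℕ, q = (s.map (cyclotomic · ℚ)).prod := by
  have hfactors : ∀ r ∈ normalizedFactors q, r ∈ Set.range (cyclotomic · ℚ) := by
    intro r hr
    have hirr := irreducible_of_normalized_factor r hr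
    have hmon : r.Monic := normalize_normalized_factor r hr ▸ monic_normalize hirr.ne_zero
    obtain ⟨m, hm⟩ := exists_eq_cyclotomic_of_irreducible_of_dvd_X_pow_sub_one hirr hmon hn
      (h r hirr (dvd_of_mem_normalizedFactors hr))
    exact ⟨m, hm.symm⟩
  obtain ⟨s, hs⟩ := Multiset.exists_map_eq_of_forall_mem_range hfactors
  refine ⟨s, ?_⟩
  rw [hs, prod_normalizedFactors_eq hq.ne_zero, hq.normalize_eq_self]

theorem Matrix.exists_charpoly_eq_prod_cyclotomic {ι : Type*} [Fintype ι] [DecidableEq ι]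
    {A : Matrix ι ι ℤ} {n : ℕ} (hn : 0 < n) (hA : A ^ n = 1) :
    ∃ s : Multiset ℕ, A.charpoly = (s.map (cyclotomic · ℤ)).prod := by
  have hB : A.map (Int.castRingHom ℚ) ^ n = 1 := by
    rw [← RingHom.mapMatrix_apply, ← map_pow, hA, map_one]
  obtain ⟨s, hs⟩ := (A.map (Int.castRingHom ℚ)).charpoly_monic.exists_eq_prod_cyclotomic hn
    fun r hr hdvd => dvd_X_pow_sub_one_of_irreducible_dvd_charpoly hB hr hdvd
  refine ⟨s, Polynomial.map_injective (Int.castRingHom ℚ) Int.cast_injective ?_⟩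
  rw [← Matrix.charpoly_map, hs, Polynomial.map_multiset_prod, Multiset.map_map]
  simp

theorem Polynomial.rootMultiplicity_cyclotomic_mul_totient_orderOf_le {R : Type*} [CommRing R]
    [IsDomain R] (ε : R) (m : ℕ) [NeZero (m : R)] :
    rootMultiplicity ε (cyclotomic m R) * φ (orderOf ε) ≤ φ m := by
  classical
  rcases Nat.eq_zero_or_pos (rootMultiplicity ε (cyclotomic m R)) with h0 | hpos
  · simp [h0]
  have hprim : IsPrimitiveRoot ε m :=
    isRoot_cyclotomic_iff.1 ((rootMultiplicity_pos (cyclotomic_ne_zero m R)).1 hpos)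
  have hle : rootMultiplicity ε (cyclotomic m R) ≤ 1 := by
    rw [← count_roots]
    exact Multiset.nodup_iff_count_le_one.1 roots_cyclotomic_nodup ε
  rw [← hprim.eq_orderOf]
  exact (Nat.mul_le_mul_right _ hle).trans_eq (one_mul _)

theorem Polynomial.cyclotomic_prime_pow_mul_eq_pow_totient_s9 (R : Type*) [Ring R] {p m : ℕ}
    [Fact p.Prime] [CharP R p] (hm : ¬p ∣ m) (k : ℕ) :
    cyclotomic (p ^ k * m) R = cyclotomic m R ^ φ (p ^ k) := by
  rcases k with _ | k
  · simp
  rw [cyclotomic_mul_prime_pow_eq R hm k.succ_pos, Nat.totient_prime_pow_succ Fact.out,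
    pow_succ, Nat.mul_sub_one, Nat.succ_sub_one]

theorem Polynomial.rootMultiplicity_cyclotomic_mul_totient_orderOf_le_of_charP {R : Type*}
    [CommRing R] [IsDomain R] (p : ℕ) [Fact p.Prime] [CharP R p] (ε : R) (m : ℕ) :
    rootMultiplicity ε (cyclotomic m R) * φ (orderOf ε) ≤ φ m := by
  classical
  rcases m.eq_zero_or_pos with rfl | hm
  · simp
  have hp : p.Prime := Fact.out
  obtain ⟨k, m', hpm', rfl⟩ := Nat.exists_eq_pow_mul_and_not_dvd hm.ne' p hp.one_lt.ne'
  have : NeZero (m' : R) := ⟨by rwa [Ne, CharP.cast_eq_zero_iff R p]⟩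
  rw [cyclotomic_prime_pow_mul_eq_pow_totient_s9 R hpm', ← count_roots, roots_pow,
    Multiset.count_nsmul, count_roots, Nat.totient_mul ((hp.coprime_iff_not_dvd.2 hpm').pow_left k),
    mul_assoc]
  exact Nat.mul_le_mul_left _ (rootMultiplicity_cyclotomic_mul_totient_orderOf_le ε m')

theorem Polynomial.rootMultiplicity_prod_cyclotomic_mul_totient_orderOf_le {R : Type*}
    [CommRing R] [IsDomain R] (p : ℕ) [Fact p.Prime] [CharP R p] (ε : R) (s : Multiset ℕ) :
    rootMultiplicity ε (s.map (cyclotomic · R)).prod * φ (orderOf ε) ≤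
      (s.map (cyclotomic · R)).prod.natDegree := by
  classical
  rw [← count_roots, roots_multiset_prod _ (by simp [cyclotomic_ne_zero]), Multiset.count_bind,
    ← Multiset.sum_map_mul_right, natDegree_multiset_prod_of_monic _ (by simp [cyclotomic.monic]),
    Multiset.map_map, Multiset.map_map]
  refine Multiset.sum_map_le_sum_map _ _ fun m _ => ?_
  simpa [count_roots, natDegree_cyclotomic] using
    rootMultiplicity_cyclotomic_mul_totient_orderOf_le_of_charP p ε m

/-- Let `ε ∈ (ℤ/p)ˣ` have order `t` and `g ∈ GL_d(ℤ)` have finite order.  The dimension of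
the `ε`-eigenspace of the reduction of `g` mod `p`, acting on `(ℤ/p)^d`, is at most
`d / φ(t)`. -/
theorem eigenspace_dim_le (p t d : ℕ) (hp : p.Prime) (ε : (ZMod p)ˣ) (ht : orderOf ε = t)
    (g : GL (Fin d) ℤ) (hg : IsOfFinOrder g) :
    Module.finrank (ZMod p)
      (Module.End.eigenspace
        (Matrix.mulVecLin ((g : Matrix (Fin d) (Fin d) ℤ).map (Int.cast : ℤ → ZMod p)))
        (ε : ZMod p)) ≤ d / Nat.totient t := by
  have : Fact p.Prime := ⟨hp⟩
  have hg_pow : (g : Matrix (Fin d) (Fin d) ℤ) ^ orderOf g = 1 := by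
    rw [← Units.val_pow_eq_pow_val, pow_orderOf_eq_one, Units.val_one]
  obtain ⟨s, hs⟩ := Matrix.exists_charpoly_eq_prod_cyclotomic hg.orderOf_pos hg_pow
  set gbar := (g : Matrix (Fin d) (Fin d) ℤ).map (Int.cast : ℤ → ZMod p)
  have hchar : gbar.charpoly = (s.map (cyclotomic · (ZMod p))).prod := by
    have h := Matrix.charpoly_map (g : Matrix (Fin d) (Fin d) ℤ) (Int.castRingHom (ZMod p))
    rw [hs, Polynomial.map_multiset_prod, Multiset.map_map, Int.coe_castRingHom] at h
    simpa using h
  rw [Nat.le_div_iff_mul_le (Nat.totient_pos.2 (ht ▸ orderOf_pos ε)), ← ht, ← orderOf_units]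
  calc _ ≤ rootMultiplicity (ε : ZMod p) gbar.charpoly * φ (orderOf (ε : ZMod p)) :=
        Nat.mul_le_mul_right _
          (by simpa using LinearMap.finrank_eigenspace_le gbar.mulVecLin (ε : ZMod p))
    _ ≤ gbar.charpoly.natDegree :=
        hchar ▸ rootMultiplicity_prod_cyclotomic_mul_totient_orderOf_le p _ s
    _ = d := by simp [Matrix.charpoly_natDegree_eq_dim]
end
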